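/- arXiv:math/9312211 — 2 statements merged into one kernel-verified Lean document; each statement's English description precedes it below -/
import Mathlib

section
/- Let φ(a;b,c,d,e,f,g,h) denote the very well poised basic hypergeometric series ₁₀φ₉ with numerator parameters a, q√a, −q√a, b, c, d, e, f, g, h and denominator parameters √a, −√a, aq/b, aq/c, aq/d, aq/e, aq/f, aq/g, aq/h, with argument q and base q, |q|<1, subject to the balancing condition a³q² = bcdefgh. Then φ(b−,c+) − φ = [ (aq/c)(1−cq/b)(1−bc/(aq))(1−aq)(1−aq²)(1−d)(1−e)(1−f)(1−g)(1−h) / ((1−aq/b)(1−aq²/b)(1−a/c)(1−aq/c)(1−aq/d)(1−aq/e)(1−aq/f)(1−aq/g)(1−aq/h)) ] · φ₊(b−), where φ(b−,c+) replaces (b,c) by (b/q, cq), and φ₊(b−) replaces a by aq² and each of b,c,d,e,f,g,h by bq,cq,dq,eq,fq,gq,hq and then b by b/q (i.e. a→aq², b unchanged, c,d,e,f,g,h each multiplied by q). -/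
set_option maxHeartbeats 4000000

open Filter Topology

noncomputable def qp (q x : ℂ) (k : ℕ) : ℂ := ∏ i ∈ Finset.range k, (1 - x * q ^ i)

noncomputable def qpInf (q x : ℂ) : ℂ := ∏' i : ℕ, (1 - x * q ^ i)

noncomputable def phiTerm (q a b c d e f g h : ℂ) (k : ℕ) : ℂ :=
  qp q a k * (1 - a * q ^ (2 * k)) / (1 - a) *
    (qp q b k * qp q c k * qp q d k * qp q e k * qp q f k * qp q g k * qp q h k) /
    (qp q q k * qp q (a * q / b) k * qp q (a * q / c) k * qp q (a * q / d) k *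
      qp q (a * q / e) k * qp q (a * q / f) k * qp q (a * q / g) k * qp q (a * q / h) k) *
    q ^ k

noncomputable def wTerm (q a b c d e f : ℂ) (k : ℕ) : ℂ :=
  qp q a k * (1 - a * q ^ (2 * k)) / (1 - a) *
    (qp q b k * qp q c k * qp q d k * qp q e k * qp q f k) /
    (qp q q k * qp q (a * q / b) k * qp q (a * q / c) k * qp q (a * q / d) k *
      qp q (a * q / e) k * qp q (a * q / f) k) *
    (a ^ 2 * q ^ 2 / (b * c * d * e * f)) ^ k

noncomputable def W8 (q a b c d e f : ℂ) : ℂ := ∑' k : ℕ, wTerm q a b c d e f k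

lemma qp_succ (q x : ℂ) (k : ℕ) : qp q x (k+1) = qp q x k * (1 - x * q ^ k) :=
  Finset.prod_range_succ _ _

lemma qp_succ' (q x : ℂ) (k : ℕ) : qp q x (k+1) = (1 - x) * qp q (x*q) k := by
  unfold qp
  rw [Finset.prod_range_succ']
  simp only [pow_zero, mul_one]
  rw [mul_comm]
  congr 1
  refine Finset.prod_congr rfl fun i _ => ?_
  ring

lemma qp_ne (q x : ℂ) (k : ℕ) (h : ∀ i : ℕ, 1 - x * q ^ i ≠ 0) : qp q x k ≠ 0 :=
  Finset.prod_ne_zero_iff.mpr fun i _ => h i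

/-- Lemma 1 of the paper: the contiguous relation φ(b−,c+) − φ = (factor)·φ₊(b−)
for the very well poised balanced ₁₀φ₉ (not necessarily terminating). -/
theorem stmt_0 (q a b c d e f g h : ℂ)
    (hq : ‖q‖ < 1) (hq0 : q ≠ 0)
    (ha0 : a ≠ 0) (hb0 : b ≠ 0) (hc0 : c ≠ 0) (hd0 : d ≠ 0) (he0 : e ≠ 0)
    (hf0 : f ≠ 0) (hg0 : g ≠ 0) (hh0 : h ≠ 0)
    (hbal : a ^ 3 * q ^ 2 = b * c * d * e * f * g * h)
    (hnz : ∀ k : ℤ, (1 - a * q ^ k ≠ 0) ∧ (1 - a / b * q ^ k ≠ 0) ∧ (1 - a / c * q ^ k ≠ 0) ∧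
      (1 - a / d * q ^ k ≠ 0) ∧ (1 - a / e * q ^ k ≠ 0) ∧ (1 - a / f * q ^ k ≠ 0) ∧
      (1 - a / g * q ^ k ≠ 0) ∧ (1 - a / h * q ^ k ≠ 0))
    (hsum1 : Summable (phiTerm q a b c d e f g h))
    (hsum2 : Summable (phiTerm q a (b / q) (c * q) d e f g h))
    (hsum3 : Summable (phiTerm q (a * q ^ 2) b (c * q) (d * q) (e * q) (f * q) (g * q) (h * q))) :
    (∑' k : ℕ, phiTerm q a (b / q) (c * q) d e f g h k) -
      (∑' k : ℕ, phiTerm q a b c d e f g h k) =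
    (a * q / c) * (1 - c * q / b) * (1 - b * c / (a * q)) * (1 - a * q) * (1 - a * q ^ 2) *
      (1 - d) * (1 - e) * (1 - f) * (1 - g) * (1 - h) /
      ((1 - a * q / b) * (1 - a * q ^ 2 / b) * (1 - a / c) * (1 - a * q / c) * (1 - a * q / d) *
        (1 - a * q / e) * (1 - a * q / f) * (1 - a * q / g) * (1 - a * q / h)) *
      ∑' k : ℕ, phiTerm q (a * q ^ 2) b (c * q) (d * q) (e * q) (f * q) (g * q) (h * q) k := by
  have hN : ∀ m : ℕ, (1 - a * q ^ m ≠ 0) ∧ (1 - a / b * q ^ m ≠ 0) ∧ (1 - a / c * q ^ m ≠ 0) ∧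
      (1 - a / d * q ^ m ≠ 0) ∧ (1 - a / e * q ^ m ≠ 0) ∧ (1 - a / f * q ^ m ≠ 0) ∧
      (1 - a / g * q ^ m ≠ 0) ∧ (1 - a / h * q ^ m ≠ 0) := fun m => by
    simpa using hnz (m : ℤ)
  have hqpow : ∀ m : ℕ, (1:ℂ) - q^(m+1) ≠ 0 := by
    intro m hcon
    have h1 : ‖q^(m+1)‖ < 1 := by
      rw [norm_pow]; exact pow_lt_one₀ (norm_nonneg q) hq (Nat.succ_ne_zero m)
    rw [← sub_eq_zero.mp hcon] at h1
    simp at h1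
  -- basic nonvanishing facts
  have n1a : (1:ℂ) - a ≠ 0 := by simpa using (hN 0).1
  have n1aq : 1 - a*q ≠ 0 := by have := (hN 1).1; rwa [pow_one] at this
  have n1aq2 : 1 - a*q^2 ≠ 0 := (hN 2).1
  have n1ab : 1 - a*q/b ≠ 0 := by
    have := (hN 1).2.1; rwa [pow_one, show a/b*q = a*q/b from by ring] at this
  have n1ab2 : 1 - a*q^2/b ≠ 0 := by
    have := (hN 2).2.1; rwa [show a/b*q^2 = a*q^2/b from by ring] at this
  have n1ac0 : 1 - a/c ≠ 0 := by simpa using (hN 0).2.2.1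
  have n1ac : 1 - a*q/c ≠ 0 := by
    have := (hN 1).2.2.1; rwa [pow_one, show a/c*q = a*q/c from by ring] at this
  have n1ad : 1 - a*q/d ≠ 0 := by
    have := (hN 1).2.2.2.1; rwa [pow_one, show a/d*q = a*q/d from by ring] at this
  have n1ae : 1 - a*q/e ≠ 0 := by
    have := (hN 1).2.2.2.2.1; rwa [pow_one, show a/e*q = a*q/e from by ring] at this
  have n1af : 1 - a*q/f ≠ 0 := by
    have := (hN 1).2.2.2.2.2.1; rwa [pow_one, show a/f*q = a*q/f from by ring] at this
  have n1ag : 1 - a*q/g ≠ 0 := by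
    have := (hN 1).2.2.2.2.2.2.1; rwa [pow_one, show a/g*q = a*q/g from by ring] at this
  have n1ah : 1 - a*q/h ≠ 0 := by
    have := (hN 1).2.2.2.2.2.2.2; rwa [pow_one, show a/h*q = a*q/h from by ring] at this
  -- the coefficient
  set C : ℂ := (a * q / c) * (1 - c * q / b) * (1 - b * c / (a * q)) * (1 - a * q) *
      (1 - a * q ^ 2) * (1 - d) * (1 - e) * (1 - f) * (1 - g) * (1 - h) /
      ((1 - a * q / b) * (1 - a * q ^ 2 / b) * (1 - a / c) * (1 - a * q / c) * (1 - a * q / d) *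
        (1 - a * q / e) * (1 - a * q / f) * (1 - a * q / g) * (1 - a * q / h)) with hC
  -- termwise identity
  have key : ∀ n : ℕ,
      phiTerm q a (b / q) (c * q) d e f g h (n+1) - phiTerm q a b c d e f g h (n+1) =
      C * phiTerm q (a * q ^ 2) b (c * q) (d * q) (e * q) (f * q) (g * q) (h * q) n := by
    intro n
    have nk1 : 1 - a*(q^n*q) ≠ 0 := by
      have := (hN (n+1)).1; rwa [pow_succ, ← mul_assoc, mul_assoc] at this
    have nk2 : 1 - a*q/b*(q^n*q) ≠ 0 := by
      have := (hN (n+2)).2.1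
      rwa [show a/b*q^(n+2) = a*q/b*(q^n*q) from by ring] at this
    have nk3 : 1 - a/c*(q^n*q) ≠ 0 := by
      have := (hN (n+1)).2.2.1
      rwa [show a/c*q^(n+1) = a/c*(q^n*q) from by rw [pow_succ]] at this
    have nq1 : 1 - q*q^n ≠ 0 := by
      have := hqpow n; rwa [show q^(n+1) = q*q^n from by rw [pow_succ]; ring] at this
    have hQq : qp q q n ≠ 0 := qp_ne _ _ _ fun i => by
      have := hqpow i; rwa [show q^(i+1) = q*q^i from by rw [pow_succ]; ring] at this
    have hQB3 : qp q (a*q^3/b) n ≠ 0 := qp_ne _ _ _ fun i => by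
      have := (hN (i+3)).2.1
      rwa [show a/b*q^(i+3) = a*q^3/b*q^i from by ring] at this
    have hQC2 : qp q (a*q^2/c) n ≠ 0 := qp_ne _ _ _ fun i => by
      have := (hN (i+2)).2.2.1
      rwa [show a/c*q^(i+2) = a*q^2/c*q^i from by ring] at this
    have hQD2 : qp q (a*q^2/d) n ≠ 0 := qp_ne _ _ _ fun i => by
      have := (hN (i+2)).2.2.2.1
      rwa [show a/d*q^(i+2) = a*q^2/d*q^i from by ring] at this
    have hQE2 : qp q (a*q^2/e) n ≠ 0 := qp_ne _ _ _ fun i => by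
      have := (hN (i+2)).2.2.2.2.1
      rwa [show a/e*q^(i+2) = a*q^2/e*q^i from by ring] at this
    have hQF2 : qp q (a*q^2/f) n ≠ 0 := qp_ne _ _ _ fun i => by
      have := (hN (i+2)).2.2.2.2.2.1
      rwa [show a/f*q^(i+2) = a*q^2/f*q^i from by ring] at this
    have hQG2 : qp q (a*q^2/g) n ≠ 0 := qp_ne _ _ _ fun i => by
      have := (hN (i+2)).2.2.2.2.2.2.1
      rwa [show a/g*q^(i+2) = a*q^2/g*q^i from by ring] at this
    have hQH2 : qp q (a*q^2/h) n ≠ 0 := qp_ne _ _ _ fun i => by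
      have := (hN (i+2)).2.2.2.2.2.2.2
      rwa [show a/h*q^(i+2) = a*q^2/h*q^i from by ring] at this
    -- shift identities
    have ha1 : qp q a (n+1) = (1-a)*((1-a*q)*qp q (a*q^2) n) / (1 - a*(q^n*q)) := by
      rw [eq_div_iff nk1]
      have t2 : qp q a (n+1+1) = (1-a) * qp q (a*q) (n+1) := qp_succ' q a (n+1)
      have t3 : qp q (a*q) (n+1) = (1-(a*q)) * qp q (a*q*q) n := qp_succ' q (a*q) n
      rw [show a*q*q = a*q^2 from by ring] at t3
      rw [t3] at t2
      rw [← t2, qp_succ q a (n+1), pow_succ, ← mul_assoc, mul_assoc]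
    have eb1 : qp q (b/q) (n+1) = (1 - b/q) * qp q b n := by
      rw [qp_succ', div_mul_cancel₀ _ hq0]
    have eb2 : qp q b (n+1) = qp q b n * (1 - b*q^n) := qp_succ q b n
    have ec1 : qp q (c*q) (n+1) = qp q (c*q) n * (1 - c*(q^n*q)) := by
      rw [qp_succ]; ring
    have ec2 : qp q c (n+1) = (1-c) * qp q (c*q) n := qp_succ' q c n
    have ed : qp q d (n+1) = (1-d) * qp q (d*q) n := qp_succ' q d n
    have ee : qp q e (n+1) = (1-e) * qp q (e*q) n := qp_succ' q e n
    have ef : qp q f (n+1) = (1-f) * qp q (f*q) n := qp_succ' q f n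
    have eg : qp q g (n+1) = (1-g) * qp q (g*q) n := qp_succ' q g n
    have eh : qp q h (n+1) = (1-h) * qp q (h*q) n := qp_succ' q h n
    have eqq : qp q q (n+1) = qp q q n * (1 - q*q^n) := qp_succ q q n
    have eab2 : qp q (a*q^2/b) (n+1) = (1 - a*q^2/b) * qp q (a*q^3/b) n := by
      rw [qp_succ', show a*q^2/b*q = a*q^3/b from by field_simp]
    have eab1 : qp q (a*q/b) (n+1) =
        (1-a*q/b)*((1-a*q^2/b)*qp q (a*q^3/b) n) / (1 - a*q/b*(q^n*q)) := by
      rw [eq_div_iff nk2]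
      have t2 : qp q (a*q/b) (n+1+1) = (1-a*q/b) * qp q (a*q/b*q) (n+1) := qp_succ' q (a*q/b) (n+1)
      rw [show a*q/b*q = a*q^2/b from by field_simp, eab2] at t2
      rw [← t2, qp_succ q (a*q/b) (n+1), pow_succ, ← mul_assoc, mul_assoc]
    have eac0 : qp q (a/c) (n+1) =
        (1-a/c)*((1-a*q/c)*qp q (a*q^2/c) n) / (1 - a/c*(q^n*q)) := by
      rw [eq_div_iff nk3]
      have t2 : qp q (a/c) (n+1+1) = (1-a/c) * qp q (a/c*q) (n+1) := qp_succ' q (a/c) (n+1)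
      have t3 : qp q (a/c*q) (n+1) = (1-(a/c*q)) * qp q (a/c*q*q) n := qp_succ' q (a/c*q) n
      rw [show a/c*q*q = a*q^2/c from by field_simp,
          show a/c*q = a*q/c from by ring] at t3
      rw [show a/c*q = a*q/c from by ring] at t2
      rw [t3] at t2
      rw [← t2, qp_succ q (a/c) (n+1), pow_succ, ← mul_assoc, mul_assoc]
    have eac1 : qp q (a*q/c) (n+1) = (1-a*q/c) * qp q (a*q^2/c) n := by
      rw [qp_succ', show a*q/c*q = a*q^2/c from by field_simp]
    have ead : qp q (a*q/d) (n+1) = (1-a*q/d) * qp q (a*q^2/d) n := by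
      rw [qp_succ', show a*q/d*q = a*q^2/d from by field_simp]
    have eae : qp q (a*q/e) (n+1) = (1-a*q/e) * qp q (a*q^2/e) n := by
      rw [qp_succ', show a*q/e*q = a*q^2/e from by field_simp]
    have eaf : qp q (a*q/f) (n+1) = (1-a*q/f) * qp q (a*q^2/f) n := by
      rw [qp_succ', show a*q/f*q = a*q^2/f from by field_simp]
    have eag : qp q (a*q/g) (n+1) = (1-a*q/g) * qp q (a*q^2/g) n := by
      rw [qp_succ', show a*q/g*q = a*q^2/g from by field_simp]
    have eah : qp q (a*q/h) (n+1) = (1-a*q/h) * qp q (a*q^2/h) n := by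
      rw [qp_succ', show a*q/h*q = a*q^2/h from by field_simp]
    simp only [phiTerm, hC]
    rw [show a*q/(b/q) = a*q^2/b from by field_simp,
        show a*q/(c*q) = a/c from by rw [mul_comm a q, mul_comm c q, mul_div_mul_left _ _ hq0],
        show a*q^2*q/b = a*q^3/b from by ring,
        show a*q^2*q/(c*q) = a*q^2/c from by field_simp,
        show a*q^2*q/(d*q) = a*q^2/d from by field_simp,
        show a*q^2*q/(e*q) = a*q^2/e from by field_simp,
        show a*q^2*q/(f*q) = a*q^2/f from by field_simp,
        show a*q^2*q/(g*q) = a*q^2/g from by field_simp,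
        show a*q^2*q/(h*q) = a*q^2/h from by field_simp]
    rw [show q^(2*(n+1)) = q^n*q^n*q^2 from by rw [show 2*(n+1) = n+n+2 from by ring, pow_add, pow_add],
        show q^(2*n) = q^n*q^n from by rw [two_mul, pow_add],
        show q^(n+1) = q^n*q from pow_succ q n]
    rw [ha1, eb1, eb2, ec1, ec2, ed, ee, ef, eg, eh, eqq, eab2, eab1, eac0, eac1,
        ead, eae, eaf, eag, eah]
    rw [show (1:ℂ) - a*q^2*(q^n*q^n) = 1 - a*(q^n*q^n*q^2) from by ring]
    set P := q^n with hP
    set vA := (1:ℂ) - a with hvA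
    set vAq := (1:ℂ) - a*q with hvAq
    set vAq2 := (1:ℂ) - a*q^2 with hvAq2
    set CEN := (1:ℂ) - a*(P*P*q^2) with hCEN
    set kA := (1:ℂ) - a*(P*q) with hkA
    set vBq := (1:ℂ) - b/q with hvBq
    set kB := (1:ℂ) - b*P with hkB
    set vC := (1:ℂ) - c with hvC
    set kC := (1:ℂ) - c*(P*q) with hkC
    set td := (1:ℂ) - d with htd
    set te := (1:ℂ) - e with hte
    set tf := (1:ℂ) - f with htf
    set tg := (1:ℂ) - g with htg
    set th := (1:ℂ) - h with hth
    set kQ := (1:ℂ) - q*P with hkQ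
    set vAB := (1:ℂ) - a*q/b with hvAB
    set vAB2 := (1:ℂ) - a*q^2/b with hvAB2
    set kAB := (1:ℂ) - a*q/b*(P*q) with hkAB
    set vAC0 := (1:ℂ) - a/c with hvAC0
    set vAC := (1:ℂ) - a*q/c with hvAC
    set kAC := (1:ℂ) - a/c*(P*q) with hkAC
    set ud := (1:ℂ) - a*q/d with hud
    set ue := (1:ℂ) - a*q/e with hue
    set uf := (1:ℂ) - a*q/f with huf
    set ug := (1:ℂ) - a*q/g with hug
    set uh := (1:ℂ) - a*q/h with huh
    set vCB := (1:ℂ) - c*q/b with hvCB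
    set vBCA := (1:ℂ) - b*c/(a*q) with hvBCA
    set Z1 := qp q (a*q^2) n with hZ1
    set Z2 := qp q b n with hZ2
    set Z3 := qp q (c*q) n with hZ3
    set Z4 := qp q (d*q) n with hZ4
    set Z5 := qp q (e*q) n with hZ5
    set Z6 := qp q (f*q) n with hZ6
    set Z7 := qp q (g*q) n with hZ7
    set Z8 := qp q (h*q) n with hZ8
    set Z9 := qp q q n with hZ9
    set Z10 := qp q (a*q^3/b) n with hZ10
    set Z11 := qp q (a*q^2/c) n with hZ11
    set Z12 := qp q (a*q^2/d) n with hZ12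
    set Z13 := qp q (a*q^2/e) n with hZ13
    set Z14 := qp q (a*q^2/f) n with hZ14
    set Z15 := qp q (a*q^2/g) n with hZ15
    set Z16 := qp q (a*q^2/h) n with hZ16
    clear_value P vA vAq vAq2 CEN kA vBq kB vC kC td te tf tg th kQ vAB vAB2 kAB vAC0 vAC kAC ud ue uf ug uh vCB vBCA Z1 Z2 Z3 Z4 Z5 Z6 Z7 Z8 Z9 Z10 Z11 Z12 Z13 Z14 Z15 Z16
    have hdrop : ∀ X Y Z W : ℂ, W ≠ 0 → W * X / Y * Z / W = X * Z / Y := by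
      intro X Y Z W hW
      rw [div_mul_eq_mul_div, div_div, show Y * W = W * Y from mul_comm _ _,
        show W*X*Z = W*(X*Z) from by ring]
      exact mul_div_mul_left _ _ hW
    rw [hdrop (vAq * Z1) kA CEN vA n1a]
    have hca : c - a ≠ 0 := by
      have : c - a = c*(1 - a/c) := by field_simp
      rw [this]; exact mul_ne_zero hc0 (hvAC0 ▸ n1ac0)
    have hba : b - a*q ≠ 0 := by
      have : b - a*q = b*(1 - a*q/b) := by field_simp
      rw [this]; exact mul_ne_zero hb0 (hvAB ▸ n1ab)
    have hDA : kA*kQ*vAC0 ≠ 0 := mul_ne_zero (mul_ne_zero nk1 nq1) n1ac0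
    have hDB : kA*kQ*vAB ≠ 0 := mul_ne_zero (mul_ne_zero nk1 nq1) n1ab
    have hDAg : kA*kQ*(c*vAC0) ≠ 0 := mul_ne_zero (mul_ne_zero nk1 nq1) (mul_ne_zero hc0 n1ac0)
    have hDBg : kA*kQ*(b*vAB) ≠ 0 := mul_ne_zero (mul_ne_zero nk1 nq1) (mul_ne_zero hb0 n1ab)
    have hDCg : (b*vAB)*(c*vAC0) ≠ 0 :=
      mul_ne_zero (mul_ne_zero hb0 n1ab) (mul_ne_zero hc0 n1ac0)
    have hDCu : vAB*vAC0*c*vAq2 ≠ 0 :=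
      mul_ne_zero (mul_ne_zero (mul_ne_zero n1ab n1ac0) hc0) n1aq2
    have hq1 : q*vBq = q - b := by rw [hvBq]; field_simp
    have hc1 : c*kAC = c - a*(P*q) := by rw [hkAC]; field_simp
    have hc2 : c*vAC0 = c - a := by rw [hvAC0]; field_simp
    have hb1 : b*kAB = b - a*q^2*P := by rw [hkAB]; field_simp
    have hb2 : b*vAB = b - a*q := by rw [hvAB]; field_simp
    have hb3 : b*vCB = b - c*q := by rw [hvCB]; field_simp
    have haq : a*q*vBCA = a*q - b*c := by rw [hvBCA]; field_simp
    have hfracg : P*(q*vBq)*kC*(c*kAC)/(kA*kQ*(c*vAC0)) - q*P*kB*vC*(b*kAB)/(kA*kQ*(b*vAB))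
        = P*(b*vCB)*(a*q*vBCA)/((b*vAB)*(c*vAC0)) := by
      rw [div_sub_div _ _ hDAg hDBg, div_eq_div_iff (mul_ne_zero hDAg hDBg) hDCg]
      rw [hq1, hc1, hc2, hb1, hb2, hb3, haq, hkC, hkA, hkQ, hkB, hvC]
      ring
    have hA' : P*(q*vBq)*kC*(c*kAC)/(kA*kQ*(c*vAC0)) = P*q*vBq*kC*kAC/(kA*kQ*vAC0) := by
      rw [div_eq_div_iff hDAg hDA]; ring
    have hB' : q*P*kB*vC*(b*kAB)/(kA*kQ*(b*vAB)) = q*P*kB*vC*kAB/(kA*kQ*vAB) := by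
      rw [div_eq_div_iff hDBg hDB]; ring
    have hC' : P*(b*vCB)*(a*q*vBCA)/((b*vAB)*(c*vAC0))
        = P*vCB*vBCA*(a*q)*vAq2/(vAB*vAC0*c*vAq2) := by
      rw [div_eq_div_iff hDCg hDCu]; ring
    have hfrac : P*q*vBq*kC*kAC/(kA*kQ*vAC0) - q*P*kB*vC*kAB/(kA*kQ*vAB)
        = P*vCB*vBCA*(a*q)*vAq2/(vAB*vAC0*c*vAq2) := by
      rw [← hA', ← hB', ← hC']; exact hfracg
    trans ((vAq * CEN * (Z1*Z2*Z3*Z4*Z5*Z6*Z7*Z8) * (td*te*tf*tg*th)) /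
        (vAB2 * vAC * (Z9*Z10*Z11*Z12*Z13*Z14*Z15*Z16) * (ud*ue*uf*ug*uh)) *
          (P*q*vBq*kC*kAC/(kA*kQ*vAC0)) -
        (vAq * CEN * (Z1*Z2*Z3*Z4*Z5*Z6*Z7*Z8) * (td*te*tf*tg*th)) /
        (vAB2 * vAC * (Z9*Z10*Z11*Z12*Z13*Z14*Z15*Z16) * (ud*ue*uf*ug*uh)) *
          (q*P*kB*vC*kAB/(kA*kQ*vAB)))
    · congr 1
      · simp only [div_eq_mul_inv, mul_inv, inv_inv]
        ring
      · simp only [div_eq_mul_inv, mul_inv, inv_inv]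
        ring
    · rw [← mul_sub, hfrac]
      ring
  -- assemble the sums
  have h00 : phiTerm q a (b / q) (c * q) d e f g h 0 - phiTerm q a b c d e f g h 0 = 0 := by
    simp [phiTerm, qp]
  calc (∑' k : ℕ, phiTerm q a (b / q) (c * q) d e f g h k) -
        (∑' k : ℕ, phiTerm q a b c d e f g h k)
      = ∑' k : ℕ, (phiTerm q a (b / q) (c * q) d e f g h k - phiTerm q a b c d e f g h k) :=
        (Summable.tsum_sub hsum2 hsum1).symm
    _ = (phiTerm q a (b / q) (c * q) d e f g h 0 - phiTerm q a b c d e f g h 0) +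
        ∑' k : ℕ, (phiTerm q a (b / q) (c * q) d e f g h (k+1) -
          phiTerm q a b c d e f g h (k+1)) := Summable.tsum_eq_zero_add (hsum2.sub hsum1)
    _ = ∑' k : ℕ, C * phiTerm q (a * q ^ 2) b (c * q) (d * q) (e * q) (f * q) (g * q) (h * q) k := by
        rw [h00, zero_add]
        exact tsum_congr key
    _ = C * ∑' k : ℕ, phiTerm q (a * q ^ 2) b (c * q) (d * q) (e * q) (f * q) (g * q) (h * q) k :=
        tsum_mul_left
end

section
/- Let |q|<1 and |s/(aq)| < 1, where s = a³q³/(bcdef). Then as n → ∞, s^{n/2} q^{n²/2 − n} X_n^{(1)} → W(a;b,c,d,e,f), where W(a;b,c,d,e,f) is the very well poised ₈φ₇ series with numerator parameters a, q√a, −q√a, b, c, d, e, f, denominator parameters √a, −√a, qa/b, qa/c, qa/d, qa/e, qa/f, base q and argument a²q²/(bcdef). Equivalently, X_n^{(1)} ~ q^{−n²/2+n} s^{−n/2} W(a;b,c,d,e,f) as n → ∞. -/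
open Filter Topology

/-- X_n^{(1)} stripped of its prefactor q^{-n²/2+n} s^{-n/2}. -/
noncomputable def Z1 (q s a b c d e f : ℂ) (n : ℕ) : ℂ :=
  (qpInf q (s * q ^ (2 * (n : ℤ) - 1)) * qpInf q (a * q ^ ((n : ℤ) + 1))) /
    (qpInf q (s * q ^ ((n : ℤ) - 1)) * qpInf q (s / a * q ^ ((n : ℤ) - 1)) *
      qpInf q (a / b * q ^ ((n : ℤ) + 1)) * qpInf q (a / c * q ^ ((n : ℤ) + 1)) *
      qpInf q (a / d * q ^ ((n : ℤ) + 1)) * qpInf q (a / e * q ^ ((n : ℤ) + 1)) *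
      qpInf q (a / f * q ^ ((n : ℤ) + 1))) *
    ∑ k ∈ Finset.range (n + 1),
      phiTerm q a b c d e f (s * q ^ ((n : ℤ) - 1)) (q ^ (-(n : ℤ))) k

/- ### Auxiliary machinery -/

lemma norm_prod_one_add_sub_one {ι : Type*} (t : Finset ι) (z : ι → ℂ) :
    ‖∏ i ∈ t, (1 + z i) - 1‖ ≤ ∏ i ∈ t, (1 + ‖z i‖) - 1 := by
  classical
  induction t using Finset.cons_induction with
  | empty => simp
  | cons a t ha ih =>
    rw [Finset.prod_cons, Finset.prod_cons]
    have h1 : (1:ℝ) ≤ ∏ i ∈ t, (1 + ‖z i‖) := by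
      calc (1:ℝ) = ∏ _i ∈ t, (1:ℝ) := by simp
        _ ≤ ∏ i ∈ t, (1 + ‖z i‖) := Finset.prod_le_prod (by simp)
            (fun i _ => by linarith [norm_nonneg (z i)])
    have e : (1 + z a) * ∏ i ∈ t, (1 + z i) - 1
        = (1 + z a) * (∏ i ∈ t, (1 + z i) - 1) + z a := by ring
    rw [e]
    have h2 := norm_add_le ((1 + z a) * (∏ i ∈ t, (1 + z i) - 1)) (z a)
    rw [norm_mul] at h2
    have h3 : ‖(1:ℂ) + z a‖ ≤ 1 + ‖z a‖ := (norm_add_le _ _).trans (by simp)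
    have h4 := norm_nonneg (∏ i ∈ t, (1 + z i) - 1)
    have h5 := norm_nonneg (z a)
    nlinarith

lemma prod_one_add_le_exp {ι : Type*} (t : Finset ι) (x : ι → ℝ) (hx : ∀ i ∈ t, 0 ≤ x i) :
    ∏ i ∈ t, (1 + x i) ≤ Real.exp (∑ i ∈ t, x i) := by
  rw [Real.exp_sum]
  exact Finset.prod_le_prod (fun i hi => by have := hx i hi; positivity)
    (fun i hi => by linarith [Real.add_one_le_exp (x i)])

lemma qpInf_sub_one_le {q : ℂ} (hq : ‖q‖ < 1) (y : ℂ) :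
    ‖qpInf q y - 1‖ ≤ Real.exp (‖y‖ / (1 - ‖q‖)) - 1 := by
  have hq1 : (0:ℝ) < 1 - ‖q‖ := by linarith
  have hE1 : (1:ℝ) ≤ Real.exp (‖y‖ / (1 - ‖q‖)) := Real.one_le_exp (by positivity)
  by_cases hM : Multipliable fun i : ℕ => 1 - y * q ^ i
  · have key : ∀ s : Finset ℕ,
        ‖∏ i ∈ s, (1 - y * q ^ i) - 1‖ ≤ Real.exp (‖y‖ / (1 - ‖q‖)) - 1 := by
      intro s
      have h1 : ‖∏ i ∈ s, (1 - y * q ^ i) - 1‖ ≤ ∏ i ∈ s, (1 + ‖-(y * q ^ i)‖) - 1 := by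
        simpa [sub_eq_add_neg] using norm_prod_one_add_sub_one s (fun i => -(y * q ^ i))
      have h2 : ∏ i ∈ s, (1 + ‖-(y * q ^ i)‖) ≤ Real.exp (∑ i ∈ s, ‖y‖ * ‖q‖ ^ i) := by
        have := prod_one_add_le_exp s (fun i => ‖y‖ * ‖q‖ ^ i)
          (fun i _ => by positivity)
        simpa [norm_mul, norm_pow] using this
      have h3 : ∑ i ∈ s, ‖y‖ * ‖q‖ ^ i ≤ ‖y‖ / (1 - ‖q‖) := by
        rw [← Finset.mul_sum, div_eq_mul_inv]
        refine mul_le_mul_of_nonneg_left ?_ (norm_nonneg y)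
        have := sum_le_hasSum s (fun i _ => by positivity)
          (hasSum_geometric_of_lt_one (norm_nonneg q) hq)
        simpa using this
      have h4 := Real.exp_le_exp.mpr h3
      linarith
    have hp : Tendsto (fun s : Finset ℕ => ‖∏ i ∈ s, (1 - y * q ^ i) - 1‖)
        atTop (𝓝 ‖qpInf q y - 1‖) := ((hM.hasProd.sub tendsto_const_nhds).norm)
    exact le_of_tendsto' hp key
  · rw [qpInf, tprod_eq_one_of_not_multipliable hM]
    simpa using hE1

lemma qpInf_tendsto {q : ℂ} (hq : ‖q‖ < 1) {z : ℕ → ℂ} (hz : Tendsto z atTop (𝓝 0)) :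
    Tendsto (fun n => qpInf q (z n)) atTop (𝓝 1) := by
  rw [tendsto_iff_norm_sub_tendsto_zero]
  have h1 : Tendsto (fun n => ‖z n‖) atTop (𝓝 0) := by simpa using hz.norm
  have h2 : Tendsto (fun n => ‖z n‖ / (1 - ‖q‖)) atTop (𝓝 0) := by
    simpa using h1.div_const (1 - ‖q‖)
  have h3 : Tendsto (fun n => Real.exp (‖z n‖ / (1 - ‖q‖)) - 1) atTop (𝓝 0) := by
    have := ((Real.continuous_exp.tendsto 0).comp h2).sub_const 1
    simpa using this
  exact squeeze_zero (fun n => norm_nonneg _) (fun n => qpInf_sub_one_le hq (z n)) h3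

lemma zpow_tendsto {q : ℂ} (hq : ‖q‖ < 1) (hq0 : q ≠ 0) (p : ℕ) (hp : 1 ≤ p) (c : ℤ) :
    Tendsto (fun n : ℕ => q ^ ((p : ℤ) * n + c)) atTop (𝓝 0) := by
  have h1 : ‖q ^ p‖ < 1 := by
    rw [norm_pow]
    calc ‖q‖ ^ p ≤ ‖q‖ ^ 1 := pow_le_pow_of_le_one (norm_nonneg q) hq.le hp
      _ = ‖q‖ := pow_one _
      _ < 1 := hq
  have h2 := (tendsto_pow_atTop_nhds_zero_of_norm_lt_one h1).const_mul (q ^ c)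
  rw [mul_zero] at h2
  refine h2.congr fun n => ?_
  have h3 : ((q : ℂ) ^ p) ^ n = q ^ ((p:ℤ) * n) := by
    rw [← zpow_natCast q p, ← zpow_natCast (q ^ (p:ℤ)) n, ← zpow_mul]
  rw [h3, ← zpow_add₀ hq0]
  congr 1
  ring

lemma star' (q u T : ℂ) (hq0 : q ≠ 0) (hu : u ≠ 0) (hT : T ≠ 0) :
    (1 - T⁻¹) * q * (1 - u * (T / (q * q))) = u / q * (1 - T) * (1 - u⁻¹ * (q * q / T)) := by
  field_simp
  ring

lemma sum_zpow_le {r : ℝ} (h0 : 0 < r) (h1 : r < 1) (m0 : ℤ) (S : Finset ℤ)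
    (hS : ∀ j ∈ S, m0 ≤ j) : ∑ j ∈ S, r ^ j ≤ r ^ m0 / (1 - r) := by
  have key : ∑ j ∈ S, r ^ j = r ^ m0 * ∑ j ∈ S, r ^ ((j - m0).toNat) := by
    rw [Finset.mul_sum]
    refine Finset.sum_congr rfl fun j hj => ?_
    rw [← zpow_natCast r ((j - m0).toNat), Int.toNat_of_nonneg (by linarith [hS j hj]),
      ← zpow_add₀ h0.ne']
    congr 1
    ring
  rw [key]
  have inj : ∀ x ∈ S, ∀ y ∈ S, (x - m0).toNat = (y - m0).toNat → x = y := by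
    intro x hx y hy h
    have := hS x hx; have := hS y hy; omega
  have h2 : ∑ j ∈ S, r ^ ((j - m0).toNat)
      = ∑ t ∈ S.image (fun j => (j - m0).toNat), r ^ t := (Finset.sum_image inj).symm
  have h3 : ∑ t ∈ S.image (fun j => (j - m0).toNat), r ^ t ≤ (1 - r)⁻¹ := by
    have := sum_le_hasSum (S.image (fun j => (j - m0).toNat)) (fun i _ => by positivity)
      (hasSum_geometric_of_lt_one h0.le h1)
    simpa using this
  rw [h2, div_eq_mul_inv]
  exact mul_le_mul_of_nonneg_left h3 (le_of_lt (zpow_pos h0 _))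

lemma qprod_upper {q : ℂ} (hq : ‖q‖ < 1) (hq0 : q ≠ 0) (w : ℂ) (m0 : ℤ) (m : ℕ → ℤ) (k : ℕ)
    (hinj : ∀ x ∈ Finset.range k, ∀ y ∈ Finset.range k, m x = m y → x = y)
    (hm : ∀ i ∈ Finset.range k, m0 ≤ m i) :
    ∏ i ∈ Finset.range k, ‖1 - w * q ^ (m i)‖ ≤ Real.exp (‖w‖ * (‖q‖ ^ m0 / (1 - ‖q‖))) := by
  have h0 : 0 < ‖q‖ := norm_pos_iff.mpr hq0
  have step1 : ∏ i ∈ Finset.range k, ‖1 - w * q ^ (m i)‖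
      ≤ ∏ i ∈ Finset.range k, (1 + ‖w‖ * ‖q‖ ^ (m i)) := by
    refine Finset.prod_le_prod (fun i _ => norm_nonneg _) (fun i _ => ?_)
    calc ‖1 - w * q ^ (m i)‖ ≤ ‖(1:ℂ)‖ + ‖w * q ^ (m i)‖ := norm_sub_le _ _
      _ = 1 + ‖w‖ * ‖q‖ ^ (m i) := by rw [norm_one, norm_mul, norm_zpow]
  have step2 : ∏ i ∈ Finset.range k, (1 + ‖w‖ * ‖q‖ ^ (m i))
      ≤ Real.exp (∑ i ∈ Finset.range k, ‖w‖ * ‖q‖ ^ (m i)) :=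
    prod_one_add_le_exp _ _ (fun i _ => by positivity)
  have step3 : ∑ i ∈ Finset.range k, ‖w‖ * ‖q‖ ^ (m i) ≤ ‖w‖ * (‖q‖ ^ m0 / (1 - ‖q‖)) := by
    rw [← Finset.mul_sum]
    refine mul_le_mul_of_nonneg_left ?_ (norm_nonneg w)
    have h4 : ∑ i ∈ Finset.range k, ‖q‖ ^ (m i)
        = ∑ j ∈ (Finset.range k).image m, ‖q‖ ^ j := (Finset.sum_image hinj).symm
    rw [h4]
    exact sum_zpow_le h0 hq m0 _ (fun j hj => by
      obtain ⟨i, hi, rfl⟩ := Finset.mem_image.mp hj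
      exact hm i hi)
  calc ∏ i ∈ Finset.range k, ‖1 - w * q ^ (m i)‖
      ≤ Real.exp (∑ i ∈ Finset.range k, ‖w‖ * ‖q‖ ^ (m i)) := step1.trans step2
    _ ≤ _ := Real.exp_le_exp.mpr step3

lemma one_sub_ge_exp {x : ℝ} (h0 : 0 ≤ x) (h1 : x ≤ 1/2) : Real.exp (-(2*x)) ≤ 1 - x := by
  have hx : (0:ℝ) < 1 - x := by linarith
  have h2 := Real.add_one_le_exp (2*x)
  have h3 : 1 ≤ (1 - x) * Real.exp (2*x) := by nlinarith [Real.exp_pos (2*x)]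
  rw [Real.exp_neg, inv_le_iff_one_le_mul₀ (Real.exp_pos _)]
  linarith [mul_comm (1-x) (Real.exp (2*x))]

lemma qprod_lower {q : ℂ} (hq : ‖q‖ < 1) (hq0 : q ≠ 0) (w : ℂ) (m0 : ℤ)
    (hw : ∀ j : ℤ, m0 ≤ j → 1 - w * q ^ j ≠ 0) :
    ∃ c : ℝ, 0 < c ∧ ∀ (k : ℕ) (m : ℕ → ℤ),
      (∀ x ∈ Finset.range k, ∀ y ∈ Finset.range k, m x = m y → x = y) →
      (∀ i ∈ Finset.range k, m0 ≤ m i) →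
      c ≤ ∏ i ∈ Finset.range k, ‖1 - w * q ^ (m i)‖ := by
  classical
  set r := ‖q‖ with hr
  have hr0 : 0 < r := norm_pos_iff.mpr hq0
  have hr1 : r < 1 := hq
  have hr2 : (0:ℝ) < 1 - r := by linarith
  set B := ‖w‖ * r ^ m0 / (1 - r) with hB
  have hB0 : 0 ≤ B := by positivity
  obtain ⟨N, hN⟩ : ∃ N : ℕ, B * r ^ N ≤ 1/2 := by
    have h := (tendsto_pow_atTop_nhds_zero_of_lt_one hr0.le hr1).const_mul B
    rw [mul_zero] at h
    exact (h.eventually_lt_const (by norm_num : (0:ℝ) < 1/2)).exists.imp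
      (fun N hN => hN.le)
  set J := m0 + N with hJ
  obtain ⟨ε, hε0, hε1, hε⟩ : ∃ ε : ℝ, 0 < ε ∧ ε ≤ 1 ∧
      ∀ j ∈ Finset.Ico m0 J, ε ≤ ‖1 - w * q ^ j‖ := by
    by_cases h : (Finset.Ico m0 J).Nonempty
    · refine ⟨min ((Finset.Ico m0 J).inf' h (fun j => ‖1 - w * q ^ j‖)) 1, ?_,
        min_le_right _ _, fun j hj => (min_le_left _ _).trans (Finset.inf'_le _ hj)⟩
      refine lt_min ?_ one_pos
      rw [Finset.lt_inf'_iff]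
      intro j hj
      exact norm_pos_iff.mpr (hw j (Finset.mem_Ico.mp hj).1)
    · exact ⟨1, one_pos, le_rfl, fun j hj => absurd ⟨j, hj⟩ h⟩
  refine ⟨ε ^ N * Real.exp (-(2 * (B * r ^ N))), by positivity, ?_⟩
  intro k m hinj hm
  set I1 := (Finset.range k).filter (fun i => m i < J) with hI1
  set I2 := (Finset.range k).filter (fun i => ¬ m i < J) with hI2
  have hsplit : ∏ i ∈ Finset.range k, ‖1 - w * q ^ (m i)‖
      = (∏ i ∈ I1, ‖1 - w * q ^ (m i)‖) * (∏ i ∈ I2, ‖1 - w * q ^ (m i)‖) :=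
    (Finset.prod_filter_mul_prod_filter_not _ _ _).symm
  have hcard : I1.card ≤ N := by
    have hsub : I1.image m ⊆ Finset.Ico m0 J := by
      intro j hj
      obtain ⟨i, hi, rfl⟩ := Finset.mem_image.mp hj
      have hi' := Finset.mem_filter.mp hi
      exact Finset.mem_Ico.mpr ⟨hm i hi'.1, hi'.2⟩
    have hcardeq : I1.card = (I1.image m).card :=
      (Finset.card_image_of_injOn (fun x hx y hy h =>
        hinj x (Finset.mem_filter.mp hx).1 y (Finset.mem_filter.mp hy).1 h)).symm
    rw [hcardeq]
    calc (I1.image m).card ≤ (Finset.Ico m0 J).card := Finset.card_le_card hsub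
      _ = N := by rw [Int.card_Ico]; simp [hJ]
  have hI1bd : ε ^ N ≤ ∏ i ∈ I1, ‖1 - w * q ^ (m i)‖ := by
    calc ε ^ N ≤ ε ^ I1.card := pow_le_pow_of_le_one hε0.le hε1 hcard
      _ = ∏ _i ∈ I1, ε := by rw [Finset.prod_const]
      _ ≤ ∏ i ∈ I1, ‖1 - w * q ^ (m i)‖ := Finset.prod_le_prod (fun i _ => hε0.le)
          (fun i hi => hε (m i) (Finset.mem_Ico.mpr
            ⟨hm i (Finset.mem_filter.mp hi).1, (Finset.mem_filter.mp hi).2⟩))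
  have hsum : ∑ i ∈ I2, ‖w‖ * r ^ (m i) ≤ B * r ^ N := by
    rw [← Finset.mul_sum]
    have himg : ∑ i ∈ I2, r ^ (m i) = ∑ j ∈ I2.image m, r ^ j :=
      (Finset.sum_image (fun x hx y hy h =>
        hinj x (Finset.mem_filter.mp hx).1 y (Finset.mem_filter.mp hy).1 h)).symm
    have hle := sum_zpow_le hr0 hr1 J (I2.image m) (fun j hj => by
      obtain ⟨i, hi, rfl⟩ := Finset.mem_image.mp hj
      exact not_lt.mp (Finset.mem_filter.mp hi).2)
    have heq : ‖w‖ * (r ^ J / (1 - r)) = B * r ^ N := by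
      rw [hB, hJ, zpow_add₀ hr0.ne', zpow_natCast]
      ring
    calc ‖w‖ * ∑ i ∈ I2, r ^ (m i) = ‖w‖ * ∑ j ∈ I2.image m, r ^ j := by rw [himg]
      _ ≤ ‖w‖ * (r ^ J / (1 - r)) := mul_le_mul_of_nonneg_left hle (norm_nonneg w)
      _ = B * r ^ N := heq
  have hxj : ∀ i ∈ I2, ‖w‖ * r ^ (m i) ≤ 1/2 := by
    intro i hi
    have hterm : ‖w‖ * r ^ (m i) ≤ ∑ x ∈ I2, ‖w‖ * r ^ (m x) :=
      Finset.single_le_sum (f := fun i => ‖w‖ * r ^ (m i)) (fun i _ => by positivity) hi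
    linarith
  have hI2bd : Real.exp (-(2 * (B * r ^ N))) ≤ ∏ i ∈ I2, ‖1 - w * q ^ (m i)‖ := by
    have hstep : ∀ i ∈ I2, Real.exp (-(2 * (‖w‖ * r ^ (m i)))) ≤ ‖1 - w * q ^ (m i)‖ := by
      intro i hi
      have h1 := one_sub_ge_exp (by positivity) (hxj i hi)
      have h2 : 1 - ‖w‖ * r ^ (m i) ≤ ‖1 - w * q ^ (m i)‖ := by
        have h3 := norm_sub_norm_le (1:ℂ) (w * q ^ (m i))
        rw [norm_one, norm_mul, norm_zpow] at h3
        exact h3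
      linarith
    have hsum2 : -(2 * (B * r ^ N)) ≤ ∑ i ∈ I2, -(2 * (‖w‖ * r ^ (m i))) := by
      have heq2 : ∑ i ∈ I2, -(2 * (‖w‖ * r ^ (m i))) = -(2 * ∑ i ∈ I2, ‖w‖ * r ^ (m i)) := by
        rw [Finset.mul_sum, ← Finset.sum_neg_distrib]
      rw [heq2]
      linarith
    calc Real.exp (-(2 * (B * r ^ N)))
        ≤ Real.exp (∑ i ∈ I2, -(2 * (‖w‖ * r ^ (m i)))) := Real.exp_le_exp.mpr hsum2
      _ = ∏ i ∈ I2, Real.exp (-(2 * (‖w‖ * r ^ (m i)))) := Real.exp_sum _ _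
      _ ≤ ∏ i ∈ I2, ‖1 - w * q ^ (m i)‖ :=
          Finset.prod_le_prod (fun i _ => (Real.exp_pos _).le) hstep
  rw [hsplit]
  exact mul_le_mul hI1bd hI2bd (Real.exp_pos _).le (le_trans (by positivity) hI1bd)

/-- The n-th summand. -/
noncomputable def tt (q s a b c d e f : ℂ) (n k : ℕ) : ℂ :=
  phiTerm q a b c d e f (s * q ^ ((n:ℤ) - 1)) (q ^ (-(n:ℤ))) k

/-- The correction factor. -/
noncomputable def corr (q s a : ℂ) (n k : ℕ) : ℂ :=
  (qp q (s * q ^ ((n:ℤ) - 1)) k * ∏ i ∈ Finset.range k, (1 - q ^ ((n:ℤ) - (i:ℤ)))) /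
    ((∏ i ∈ Finset.range k, (1 - s / a * q ^ ((n:ℤ) - 2 - (i:ℤ)))) *
      qp q (a * q ^ ((n:ℤ) + 1)) k)

lemma key_identity (q s a b c d e f : ℂ) (hq0 : q ≠ 0) (ha0 : a ≠ 0) (hs0 : s ≠ 0)
    (hbc : b * c * d * e * f ≠ 0) (hsval : s = a ^ 3 * q ^ 3 / (b * c * d * e * f))
    (hSA : ∀ j : ℤ, 1 - s / a * q ^ j ≠ 0) (n k : ℕ) :
    tt q s a b c d e f n k = wTerm q a b c d e f k * corr q s a n k := by
  have hsa0 : s / a ≠ 0 := div_ne_zero hs0 ha0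
  have zmul : ∀ e1 e2 : ℤ, q ^ e1 * q ^ e2 = q ^ (e1 + e2) := fun e1 e2 => (zpow_add₀ hq0 _ _).symm
  have has0 : a / s ≠ 0 := div_ne_zero ha0 hs0
  have hgh : a * q / (q ^ (-(n:ℤ))) = a * q ^ ((n:ℤ) + 1) := by
    rw [zpow_neg, div_inv_eq_mul, zpow_add₀ hq0, zpow_one]
    ring
  have hgg : a * q / (s * q ^ ((n:ℤ) - 1)) = a / s * q ^ (2 - (n:ℤ)) := by
    rw [div_eq_iff (mul_ne_zero hs0 (zpow_ne_zero _ hq0))]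
    have h2 : q ^ (2 - (n:ℤ)) * q ^ ((n:ℤ) - 1) = q ^ (1:ℤ) := by rw [zmul]; congr 1; ring
    calc a * q = a * (s/s) * (q ^ (2 - (n:ℤ)) * q ^ ((n:ℤ) - 1)) := by
          rw [div_self hs0, h2, zpow_one]; ring
      _ = a / s * q ^ (2 - (n:ℤ)) * (s * q ^ ((n:ℤ) - 1)) := by ring
  have hQG0 : qp q (a / s * q ^ (2 - (n:ℤ))) k ≠ 0 := by
    rw [qp]
    refine Finset.prod_ne_zero_iff.mpr fun i _ => ?_
    have e1 : a / s * q ^ (2 - (n:ℤ)) * q ^ i = a / s * q ^ (2 - (n:ℤ) + i) := by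
      rw [mul_assoc, ← zpow_natCast q i, zmul]
    have e2 : (a / s * q ^ (2 - (n:ℤ) + i)) * (s / a * q ^ ((n:ℤ) - 2 - i)) = 1 := by
      rw [mul_mul_mul_comm, zmul]
      have h5 : a / s * (s / a) = 1 := by field_simp
      rw [h5, show (2 - (n:ℤ) + i + ((n:ℤ) - 2 - i)) = 0 by ring, zpow_zero, mul_one]
    have e3 : (1:ℂ) - a / s * q ^ (2 - (n:ℤ)) * q ^ i
        = -(a / s * q ^ (2 - (n:ℤ) + i)) * (1 - s / a * q ^ ((n:ℤ) - 2 - i)) := by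
      rw [e1]
      linear_combination -e2
    rw [e3]
    exact mul_ne_zero (neg_ne_zero.mpr (mul_ne_zero has0 (zpow_ne_zero _ hq0))) (hSA _)
  have hPc0 : (∏ i ∈ Finset.range k, ((1:ℂ) - s / a * q ^ ((n:ℤ) - 2 - (i:ℤ)))) ≠ 0 :=
    Finset.prod_ne_zero_iff.mpr fun i _ => hSA _
  have ratio : qp q (q ^ (-(n:ℤ))) k * q ^ k
        * (∏ i ∈ Finset.range k, (1 - s / a * q ^ ((n:ℤ) - 2 - (i:ℤ))))
      = (s / (a * q)) ^ k * (∏ i ∈ Finset.range k, (1 - q ^ ((n:ℤ) - (i:ℤ))))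
        * qp q (a / s * q ^ (2 - (n:ℤ))) k := by
    rw [qp, qp,
      show (q:ℂ) ^ k = ∏ _i ∈ Finset.range k, q from by
        rw [Finset.prod_const, Finset.card_range],
      show (s / (a * q) : ℂ) ^ k = ∏ _i ∈ Finset.range k, (s / (a * q)) from by
        rw [Finset.prod_const, Finset.card_range],
      ← Finset.prod_mul_distrib, ← Finset.prod_mul_distrib, ← Finset.prod_mul_distrib,
      ← Finset.prod_mul_distrib]
    refine Finset.prod_congr rfl fun i _ => ?_
    have hT0 : (q : ℂ) ^ ((n:ℤ) - (i:ℤ)) ≠ 0 := zpow_ne_zero _ hq0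
    have mX : q ^ (-(n:ℤ)) * q ^ i = (q ^ ((n:ℤ) - (i:ℤ)))⁻¹ := by
      rw [← zpow_natCast q i, zmul, ← zpow_neg]
      congr 1
      ring
    have mY : s / a * q ^ ((n:ℤ) - 2 - (i:ℤ)) = s / a * (q ^ ((n:ℤ) - (i:ℤ)) / (q * q)) := by
      congr 1
      rw [eq_div_iff (mul_ne_zero hq0 hq0), ← mul_assoc, ← zpow_add_one₀ hq0, ← zpow_add_one₀ hq0]
      congr 1
      ring
    have mZ : a / s * q ^ (2 - (n:ℤ)) * q ^ i = (s / a)⁻¹ * (q * q / q ^ ((n:ℤ) - (i:ℤ))) := by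
      rw [inv_div, mul_assoc, ← zpow_natCast q i, zmul]
      congr 1
      rw [eq_div_iff hT0, zmul, show (2 - (n:ℤ) + (i:ℤ) + ((n:ℤ) - (i:ℤ))) = 2 by ring,
        show (2:ℤ) = ((2:ℕ):ℤ) from rfl, zpow_natCast]
      ring
    have mρ : s / (a * q) = (s / a) / q := by ring
    rw [mX, mY, mZ, mρ]
    exact star' q (s/a) (q ^ ((n:ℤ) - (i:ℤ))) hq0 hsa0 hT0
  have hρeq : a ^ 2 * q ^ 2 / (b * c * d * e * f) = s / (a * q) := by
    rw [hsval]
    field_simp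
  have hr2 : qp q (q ^ (-(n:ℤ))) k * q ^ k / qp q (a / s * q ^ (2 - (n:ℤ))) k
      = (s / (a * q)) ^ k * (∏ i ∈ Finset.range k, (1 - q ^ ((n:ℤ) - (i:ℤ)))) /
        (∏ i ∈ Finset.range k, (1 - s / a * q ^ ((n:ℤ) - 2 - (i:ℤ)))) := by
    rw [div_eq_div_iff hQG0 hPc0]
    linear_combination ratio
  rw [tt, phiTerm, wTerm, corr, hgh, hgg, hρeq]
  linear_combination (qp q a k * (1 - a * q ^ (2 * k)) / (1 - a)
    * (qp q b k * qp q c k * qp q d k * qp q e k * qp q f k)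
    * qp q (s * q ^ ((n:ℤ) - 1)) k
    / (qp q q k * qp q (a * q / b) k * qp q (a * q / c) k * qp q (a * q / d) k *
        qp q (a * q / e) k * qp q (a * q / f) k * qp q (a * q ^ ((n:ℤ) + 1)) k)) * hr2

/-- (3.1): the large-n asymptotics of X_n^{(1)}: s^{n/2} q^{n²/2-n} X_n^{(1)} → W(a;b,c,d,e,f),
the very well poised ₈φ₇, provided |s/(aq)| < 1. -/
theorem stmt_7 (q a b c d e f : ℂ)
    (hq : ‖q‖ < 1) (hq0 : q ≠ 0)
    (ha0 : a ≠ 0) (hb0 : b ≠ 0) (hc0 : c ≠ 0) (hd0 : d ≠ 0) (he0 : e ≠ 0) (hf0 : f ≠ 0)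
    (habs : ‖a ^ 3 * q ^ 3 / (b * c * d * e * f) / (a * q)‖ < 1)
    (hnz : ∀ k : ℤ, (1 - a * q ^ k ≠ 0) ∧
      (1 - a ^ 3 * q ^ 3 / (b * c * d * e * f) * q ^ k ≠ 0) ∧
      (1 - a ^ 3 * q ^ 3 / (b * c * d * e * f) / a * q ^ k ≠ 0) ∧
      (1 - a / b * q ^ k ≠ 0) ∧ (1 - a / c * q ^ k ≠ 0) ∧ (1 - a / d * q ^ k ≠ 0) ∧
      (1 - a / e * q ^ k ≠ 0) ∧ (1 - a / f * q ^ k ≠ 0)) :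
    Filter.Tendsto (fun n : ℕ => Z1 q (a ^ 3 * q ^ 3 / (b * c * d * e * f)) a b c d e f n)
      Filter.atTop (nhds (W8 q a b c d e f)) := by
  set s := a ^ 3 * q ^ 3 / (b * c * d * e * f) with hsval
  have hq' : ‖q‖ < 1 := by exact hq
  have hr0 : (0:ℝ) < ‖q‖ := norm_pos_iff.mpr hq0
  have hbc : b * c * d * e * f ≠ 0 := by
    exact mul_ne_zero (mul_ne_zero (mul_ne_zero (mul_ne_zero hb0 hc0) hd0) he0) hf0
  have hs0 : s ≠ 0 :=
    div_ne_zero (mul_ne_zero (pow_ne_zero 3 ha0) (pow_ne_zero 3 hq0)) hbc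
  have hρ : ‖s / (a * q)‖ < 1 := by exact habs
  have hA : ∀ j : ℤ, 1 - a * q ^ j ≠ 0 := fun j => (hnz j).1
  have hS : ∀ j : ℤ, 1 - s * q ^ j ≠ 0 := fun j => (hnz j).2.1
  have hSA : ∀ j : ℤ, 1 - s / a * q ^ j ≠ 0 := fun j => (hnz j).2.2.1
  have hB : ∀ j : ℤ, 1 - a / b * q ^ j ≠ 0 := fun j => (hnz j).2.2.2.1
  have hC : ∀ j : ℤ, 1 - a / c * q ^ j ≠ 0 := fun j => (hnz j).2.2.2.2.1
  have hD : ∀ j : ℤ, 1 - a / d * q ^ j ≠ 0 := fun j => (hnz j).2.2.2.2.2.1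
  have hE : ∀ j : ℤ, 1 - a / e * q ^ j ≠ 0 := fun j => (hnz j).2.2.2.2.2.2.1
  have hF : ∀ j : ℤ, 1 - a / f * q ^ j ≠ 0 := fun j => (hnz j).2.2.2.2.2.2.2
  have zmul : ∀ e1 e2 : ℤ, (q:ℂ) ^ e1 * q ^ e2 = q ^ (e1 + e2) :=
    fun e1 e2 => (zpow_add₀ hq0 _ _).symm
  -- generic sequence tendsto helper
  have zt : ∀ (x : ℂ) (p : ℕ), 1 ≤ p → ∀ (c : ℤ) (E : ℕ → ℤ),
      (∀ n : ℕ, E n = (p:ℤ) * n + c) →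
      Tendsto (fun n : ℕ => x * q ^ (E n)) atTop (𝓝 0) := by
    intro x p hp c E hEq
    have h := (zpow_tendsto hq' hq0 p hp c).const_mul x
    rw [mul_zero] at h
    exact h.congr fun n => by rw [hEq n]
  -- prefactor tends to 1
  have l1 := qpInf_tendsto hq' (zt s 2 one_le_two (-1) (fun n => 2 * (n:ℤ) - 1) (fun n => by push_cast; ring))
  have l2 := qpInf_tendsto hq' (zt a 1 le_rfl 1 (fun n => (n:ℤ) + 1) (fun n => by push_cast; ring))
  have l3 := qpInf_tendsto hq' (zt s 1 le_rfl (-1) (fun n => (n:ℤ) - 1) (fun n => by push_cast; ring))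
  have l4 := qpInf_tendsto hq' (zt (s/a) 1 le_rfl (-1) (fun n => (n:ℤ) - 1) (fun n => by push_cast; ring))
  have l5 := qpInf_tendsto hq' (zt (a/b) 1 le_rfl 1 (fun n => (n:ℤ) + 1) (fun n => by push_cast; ring))
  have l6 := qpInf_tendsto hq' (zt (a/c) 1 le_rfl 1 (fun n => (n:ℤ) + 1) (fun n => by push_cast; ring))
  have l7 := qpInf_tendsto hq' (zt (a/d) 1 le_rfl 1 (fun n => (n:ℤ) + 1) (fun n => by push_cast; ring))
  have l8 := qpInf_tendsto hq' (zt (a/e) 1 le_rfl 1 (fun n => (n:ℤ) + 1) (fun n => by push_cast; ring))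
  have l9 := qpInf_tendsto hq' (zt (a/f) 1 le_rfl 1 (fun n => (n:ℤ) + 1) (fun n => by push_cast; ring))
  have hpref : Tendsto (fun n : ℕ =>
      (qpInf q (s * q ^ (2 * (n:ℤ) - 1)) * qpInf q (a * q ^ ((n:ℤ) + 1))) /
      (qpInf q (s * q ^ ((n:ℤ) - 1)) * qpInf q (s / a * q ^ ((n:ℤ) - 1)) *
        qpInf q (a / b * q ^ ((n:ℤ) + 1)) * qpInf q (a / c * q ^ ((n:ℤ) + 1)) *
        qpInf q (a / d * q ^ ((n:ℤ) + 1)) * qpInf q (a / e * q ^ ((n:ℤ) + 1)) *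
        qpInf q (a / f * q ^ ((n:ℤ) + 1)))) atTop (𝓝 1) := by
    have h := (l1.mul l2).div
      ((((((l3.mul l4).mul l5).mul l6).mul l7).mul l8).mul l9) (by norm_num)
    simp only [mul_one, div_one] at h
    exact h
  -- vanishing of terms with k > n
  have hvanish : ∀ n k : ℕ, n < k → tt q s a b c d e f n k = 0 := by
    intro n k hk
    have hqph : qp q (q ^ (-(n:ℤ))) k = 0 := by
      rw [qp]
      refine Finset.prod_eq_zero (Finset.mem_range.mpr hk) ?_
      rw [← zpow_natCast q n, zmul, show (-(n:ℤ) + (n:ℤ)) = 0 by ring, zpow_zero]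
      ring
    rw [tt, phiTerm, hqph]
    ring
  -- termwise limits
  have hfac : ∀ (x : ℂ) (c : ℤ), Tendsto (fun n : ℕ => 1 - x * q ^ ((n:ℤ) + c)) atTop (𝓝 1) := by
    intro x c
    have h := zt x 1 le_rfl c (fun n => (n:ℤ) + c) (fun n => by push_cast; ring)
    simpa using tendsto_const_nhds.sub h
  have hcorr : ∀ k : ℕ, Tendsto (fun n : ℕ => corr q s a n k) atTop (𝓝 1) := by
    intro k
    have hG : Tendsto (fun n : ℕ => qp q (s * q ^ ((n:ℤ) - 1)) k) atTop (𝓝 1) := by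
      have h := tendsto_finset_prod (Finset.range k)
        (fun i (_ : i ∈ Finset.range k) => hfac (s * q ^ ((i:ℤ) - 1)) 0)
      rw [Finset.prod_const_one] at h
      refine h.congr fun n => ?_
      rw [qp]
      refine Finset.prod_congr rfl fun i _ => ?_
      congr 1
      rw [mul_assoc, mul_assoc, ← zpow_natCast q i, zmul, zmul,
        show ((i:ℤ) - 1 + ((n:ℤ) + 0)) = ((n:ℤ) - 1 + (i:ℤ)) by ring]
    have hPb : Tendsto (fun n : ℕ => ∏ i ∈ Finset.range k, (1 - q ^ ((n:ℤ) - (i:ℤ))))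
        atTop (𝓝 1) := by
      have h := tendsto_finset_prod (Finset.range k)
        (fun i (_ : i ∈ Finset.range k) => hfac 1 (-(i:ℤ)))
      rw [Finset.prod_const_one] at h
      refine h.congr fun n => ?_
      refine Finset.prod_congr rfl fun i _ => ?_
      rw [one_mul, show (n:ℤ) + -(i:ℤ) = (n:ℤ) - (i:ℤ) by ring]
    have hPc : Tendsto (fun n : ℕ => ∏ i ∈ Finset.range k, (1 - s / a * q ^ ((n:ℤ) - 2 - (i:ℤ))))
        atTop (𝓝 1) := by
      have h := tendsto_finset_prod (Finset.range k)
        (fun i (_ : i ∈ Finset.range k) => hfac (s/a) (-2 - (i:ℤ)))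
      rw [Finset.prod_const_one] at h
      refine h.congr fun n => ?_
      refine Finset.prod_congr rfl fun i _ => ?_
      rw [show (n:ℤ) + (-2 - (i:ℤ)) = (n:ℤ) - 2 - (i:ℤ) by ring]
    have hQH : Tendsto (fun n : ℕ => qp q (a * q ^ ((n:ℤ) + 1)) k) atTop (𝓝 1) := by
      have h := tendsto_finset_prod (Finset.range k)
        (fun i (_ : i ∈ Finset.range k) => hfac (a * q ^ ((i:ℤ) + 1)) 0)
      rw [Finset.prod_const_one] at h
      refine h.congr fun n => ?_
      rw [qp]
      refine Finset.prod_congr rfl fun i _ => ?_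
      congr 1
      rw [mul_assoc, mul_assoc, ← zpow_natCast q i, zmul, zmul,
        show ((i:ℤ) + 1 + ((n:ℤ) + 0)) = ((n:ℤ) + 1 + (i:ℤ)) by ring]
    have h := (hG.mul hPb).div (hPc.mul hQH) (by norm_num)
    rw [show ((1:ℂ) * 1) / (1 * 1) = 1 by norm_num] at h
    exact h
  have hlim : ∀ k : ℕ, Tendsto (fun n : ℕ => tt q s a b c d e f n k) atTop
      (𝓝 (wTerm q a b c d e f k)) := by
    intro k
    have h := (tendsto_const_nhds : Tendsto (fun _ : ℕ => wTerm q a b c d e f k)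
      atTop (𝓝 (wTerm q a b c d e f k))).mul (hcorr k)
    rw [mul_one] at h
    exact h.congr fun n =>
      (key_identity q s a b c d e f hq0 ha0 hs0 hbc hsval hSA n k).symm
  -- ### Bounds
  have qp_upper : ∀ (w : ℂ) (k : ℕ),
      ‖qp q w k‖ ≤ Real.exp (‖w‖ * (‖q‖ ^ (-1:ℤ) / (1 - ‖q‖))) := by
    intro w k
    rw [qp, norm_prod]
    have h := qprod_upper hq' hq0 w (-1) (fun i => (i:ℤ)) k
      (fun x _ y _ h => by exact_mod_cast h) (fun i _ => by omega)
    exact le_trans (le_of_eq (Finset.prod_congr rfl fun i _ => by rw [zpow_natCast])) h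
  have qp_upper2 : ∀ (w : ℂ) (cc : ℤ) (k : ℕ), (∀ i ∈ Finset.range k, -1 ≤ cc + (i:ℤ)) →
      ‖qp q (w * q ^ cc) k‖ ≤ Real.exp (‖w‖ * (‖q‖ ^ (-1:ℤ) / (1 - ‖q‖))) := by
    intro w cc k hcc
    rw [qp, norm_prod]
    have h := qprod_upper hq' hq0 w (-1) (fun i => cc + (i:ℤ)) k
      (fun x _ y _ h => by omega) hcc
    refine le_trans (le_of_eq (Finset.prod_congr rfl fun i _ => ?_)) h
    rw [mul_assoc, ← zpow_natCast q i, zmul]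
  have hq_lower_hyp : ∀ j : ℤ, (0:ℤ) ≤ j → 1 - q * q ^ j ≠ 0 := by
    intro j hj hcontra
    have h1 : q * q ^ j = 1 := by linear_combination -hcontra
    have h2 : ‖q * q ^ j‖ < 1 := by
      rw [norm_mul, norm_zpow]
      calc ‖q‖ * ‖q‖ ^ j = ‖q‖ ^ (j + 1) := by rw [zpow_add_one₀ hr0.ne']; ring
        _ ≤ ‖q‖ ^ (1:ℤ) := zpow_le_zpow_right_of_le_one₀ hr0 hq'.le (by omega)
        _ = ‖q‖ := zpow_one _
        _ < 1 := hq'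
    rw [h1] at h2
    norm_num at h2
  obtain ⟨cQ, hcQ0, hcQ⟩ := qprod_lower hq' hq0 q 0 hq_lower_hyp
  have hdiv_hyp : ∀ (x : ℂ), (∀ j : ℤ, 1 - a / x * q ^ j ≠ 0) →
      ∀ j : ℤ, (0:ℤ) ≤ j → 1 - a * q / x * q ^ j ≠ 0 := by
    intro x hx j _
    rw [show a * q / x * q ^ j = a / x * q ^ (j + 1) from by
      rw [zpow_add_one₀ hq0]; ring]
    exact hx (j + 1)
  obtain ⟨cb, hcb0, hcb⟩ := qprod_lower hq' hq0 (a * q / b) 0 (hdiv_hyp b hB)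
  obtain ⟨cc, hcc0, hcc⟩ := qprod_lower hq' hq0 (a * q / c) 0 (hdiv_hyp c hC)
  obtain ⟨cd, hcd0, hcd⟩ := qprod_lower hq' hq0 (a * q / d) 0 (hdiv_hyp d hD)
  obtain ⟨ce, hce0, hce⟩ := qprod_lower hq' hq0 (a * q / e) 0 (hdiv_hyp e hE)
  obtain ⟨cf, hcf0, hcf⟩ := qprod_lower hq' hq0 (a * q / f) 0 (hdiv_hyp f hF)
  obtain ⟨cSA, hcSA0, hcSA⟩ := qprod_lower hq' hq0 (s / a) (-1) (fun j _ => hSA j)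
  obtain ⟨cA, hcA0, hcA⟩ := qprod_lower hq' hq0 a (-1) (fun j _ => hA j)
  have qp_lower_nat : ∀ (w : ℂ) (cw : ℝ),
      (∀ (k : ℕ) (m : ℕ → ℤ),
        (∀ x ∈ Finset.range k, ∀ y ∈ Finset.range k, m x = m y → x = y) →
        (∀ i ∈ Finset.range k, (0:ℤ) ≤ m i) →
        cw ≤ ∏ i ∈ Finset.range k, ‖1 - w * q ^ (m i)‖) →
      ∀ k : ℕ, cw ≤ ‖qp q w k‖ := by
    intro w cw hcw k
    rw [qp, norm_prod]
    exact le_trans (hcw k (fun i => (i:ℤ)) (fun x _ y _ h => by exact_mod_cast h)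
      (fun i _ => by omega))
      (le_of_eq (Finset.prod_congr rfl fun i _ => by rw [zpow_natCast]))
  have h1a : (1:ℂ) - a ≠ 0 := by have := hA 0; simpa using this
  have h1a0 : (0:ℝ) < ‖(1:ℂ) - a‖ := norm_pos_iff.mpr h1a
  -- bound on wTerm
  have hρeq2 : a ^ 2 * q ^ 2 / (b * c * d * e * f) = s / (a * q) := by
    rw [hsval]
    field_simp
  set UU : ℂ → ℝ := fun w => Real.exp (‖w‖ * (‖q‖ ^ (-1:ℤ) / (1 - ‖q‖))) with hUU
  have hUU0 : ∀ w : ℂ, 0 < UU w := fun w => Real.exp_pos _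
  set KW := UU a * (1 + ‖a‖) / ‖(1:ℂ) - a‖ * (UU b * UU c * UU d * UU e * UU f) /
    (cQ * cb * cc * cd * ce * cf) with hKW
  have hKW0 : 0 < KW := by
    rw [hKW]
    have h1 := hUU0 a; have h2 := hUU0 b; have h3 := hUU0 c; have h4 := hUU0 d
    have h5 := hUU0 e; have h6 := hUU0 f
    have hna := norm_nonneg a
    positivity
  have hwB : ∀ k : ℕ, ‖wTerm q a b c d e f k‖ ≤ KW * ‖s / (a * q)‖ ^ k := by
    intro k
    rw [wTerm, hρeq2]
    simp only [norm_mul, norm_div, norm_pow]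
    refine mul_le_mul_of_nonneg_right ?_ (by positivity)
    rw [hKW]
    have h2k : ‖(1:ℂ) - a * q ^ (2 * k)‖ ≤ 1 + ‖a‖ := by
      refine (norm_sub_le _ _).trans ?_
      rw [norm_one, norm_mul, norm_pow]
      have hle : ‖q‖ ^ (2 * k) ≤ 1 := pow_le_one₀ hr0.le hq'.le
      nlinarith [norm_nonneg a]
    have hnum1 : ‖qp q a k‖ * ‖(1:ℂ) - a * q ^ (2 * k)‖ ≤ UU a * (1 + ‖a‖) :=
      mul_le_mul (qp_upper a k) h2k (norm_nonneg _) (hUU0 a).le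
    have hnum2 : ‖qp q b k‖ * ‖qp q c k‖ * ‖qp q d k‖ * ‖qp q e k‖ * ‖qp q f k‖
        ≤ UU b * UU c * UU d * UU e * UU f := by
      refine mul_le_mul (mul_le_mul (mul_le_mul (mul_le_mul (qp_upper b k) (qp_upper c k)
        (norm_nonneg _) (hUU0 b).le) (qp_upper d k) (norm_nonneg _) (by positivity))
        (qp_upper e k) (norm_nonneg _) (by positivity)) (qp_upper f k) (norm_nonneg _)
        (by positivity)
    have hden : cQ * cb * cc * cd * ce * cf
        ≤ ‖qp q q k‖ * ‖qp q (a * q / b) k‖ * ‖qp q (a * q / c) k‖ * ‖qp q (a * q / d) k‖ *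
          ‖qp q (a * q / e) k‖ * ‖qp q (a * q / f) k‖ := by
      refine mul_le_mul (mul_le_mul (mul_le_mul (mul_le_mul (mul_le_mul
        (qp_lower_nat q cQ hcQ k) (qp_lower_nat _ cb hcb k) hcb0.le (norm_nonneg _))
        (qp_lower_nat _ cc hcc k) hcc0.le (by positivity))
        (qp_lower_nat _ cd hcd k) hcd0.le (by positivity))
        (qp_lower_nat _ ce hce k) hce0.le (by positivity))
        (qp_lower_nat _ cf hcf k) hcf0.le (by positivity)
    have hdpos : (0:ℝ) < cQ * cb * cc * cd * ce * cf := by positivity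
    refine div_le_div₀ (by positivity) ?_ hdpos hden
    refine mul_le_mul ?_ hnum2 (by positivity) (by positivity)
    exact div_le_div₀ (by positivity) hnum1 h1a0 le_rfl
  -- bound on the correction for k ≤ n
  set KC := UU s * UU 1 / (cSA * cA) with hKC
  have hKC0 : 0 < KC := by
    rw [hKC]
    have h1 := hUU0 s; have h2 := hUU0 1
    positivity
  have hCB : ∀ n k : ℕ, k ≤ n → ‖corr q s a n k‖ ≤ KC := by
    intro n k hk
    rw [corr, norm_div, norm_mul, norm_mul, hKC]
    have h1 : ‖qp q (s * q ^ ((n:ℤ) - 1)) k‖ ≤ UU s :=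
      qp_upper2 s ((n:ℤ) - 1) k (fun i hi => by
        have := Finset.mem_range.mp hi
        omega)
    have h2 : ‖∏ i ∈ Finset.range k, ((1:ℂ) - q ^ ((n:ℤ) - (i:ℤ)))‖ ≤ UU 1 := by
      rw [norm_prod]
      have h := qprod_upper hq' hq0 1 (-1) (fun i => (n:ℤ) - (i:ℤ)) k
        (fun x hx y hy hxy => by
          omega)
        (fun i hi => by
          have := Finset.mem_range.mp hi
          omega)
      exact le_trans (le_of_eq (Finset.prod_congr rfl fun i _ => by rw [one_mul])) h
    have h3 : cSA ≤ ‖∏ i ∈ Finset.range k, ((1:ℂ) - s / a * q ^ ((n:ℤ) - 2 - (i:ℤ)))‖ := by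
      rw [norm_prod]
      exact hcSA k (fun i => (n:ℤ) - 2 - (i:ℤ))
        (fun x hx y hy hxy => by omega)
        (fun i hi => by
          have h5 := Finset.mem_range.mp hi
          omega)
    have h4 : cA ≤ ‖qp q (a * q ^ ((n:ℤ) + 1)) k‖ := by
      rw [qp, norm_prod]
      refine le_trans (hcA k (fun i => (n:ℤ) + 1 + (i:ℤ)) (fun x _ y _ hxy => by omega)
        (fun i _ => by omega)) (le_of_eq (Finset.prod_congr rfl fun i _ => ?_))
      rw [mul_assoc, ← zpow_natCast q i, zmul]
    refine div_le_div₀ (by positivity) ?_ (by positivity) ?_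
    · exact mul_le_mul h1 h2 (norm_nonneg _) (hUU0 s).le
    · exact mul_le_mul h3 h4 hcA0.le (norm_nonneg _)
  --總 bound
  have hbound : ∀ (n : ℕ) (k : ℕ),
      ‖tt q s a b c d e f n k‖ ≤ KW * KC * ‖s / (a * q)‖ ^ k := by
    intro n k
    rcases le_or_gt k n with hk | hk
    · rw [key_identity q s a b c d e f hq0 ha0 hs0 hbc hsval hSA n k, norm_mul]
      calc ‖wTerm q a b c d e f k‖ * ‖corr q s a n k‖
          ≤ (KW * ‖s / (a * q)‖ ^ k) * KC :=
            mul_le_mul (hwB k) (hCB n k hk) (norm_nonneg _) (by positivity)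
        _ = KW * KC * ‖s / (a * q)‖ ^ k := by ring
    · rw [hvanish n k hk]
      simp only [norm_zero]
      positivity
  have hsumm : Summable (fun k : ℕ => KW * KC * ‖s / (a * q)‖ ^ k) :=
    (summable_geometric_of_lt_one (norm_nonneg _) hρ).mul_left _
  have htan := tendsto_tsum_of_dominated_convergence hsumm hlim
    (Filter.Eventually.of_forall (fun n k => hbound n k))
  have hsum_eq : ∀ n : ℕ, (∑' k : ℕ, tt q s a b c d e f n k)
      = ∑ k ∈ Finset.range (n + 1), tt q s a b c d e f n k := by
    intro n
    refine tsum_eq_sum (fun k hk => hvanish n k ?_)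
    have h : ¬ k < n + 1 := fun hlt => hk (Finset.mem_range.mpr hlt)
    omega
  have hsumt : Tendsto (fun n : ℕ => ∑ k ∈ Finset.range (n + 1), tt q s a b c d e f n k)
      atTop (𝓝 (W8 q a b c d e f)) := by
    rw [W8]
    exact htan.congr fun n => hsum_eq n
  have hZ := hpref.mul hsumt
  rw [one_mul] at hZ
  exact hZ.congr fun n => rfl
end
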